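/- arXiv:1510.01601 — 2 statements merged into one kernel-verified Lean document; each statement's English description precedes it below -/
import Mathlib

section
/- Let X = l², let eₙ ∈ l² be the n-th standard basis vector, and define A(x) = -5x - 7eₙ, B(x) = 5x + 5eₙ, C(x) = -3x, D(x) = 2x + 3eₙ, f(x) = 2x, g(x) = x - eₙ, H(x) = Ax + Bx + Cx + Dx, and M(f(x),g(x)) = f(x) - g(x). Then for ρ = 1, 0 ∉ (H + M(f,g))(l²); in particular, the range of H + ρ·M(f,g) is not all of l² and hence M is not generalized αβ-H((·,·),(·,·))-mixed accretive. -/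
/-- In l², with A x = -5x - 7eₙ, B x = 5x + 5eₙ, C x = -3x, D x = 2x + 3eₙ,
f x = 2x, g x = x - eₙ, H = A + B + C + D and M(f x, g x) = f x - g x, we have
0 ∉ (H + M(f,g))(l²); hence the range condition fails for ρ = 1. -/
theorem stmt6 (n : ℕ) (e : lp (fun _ : ℕ => ℝ) 2) (he : e = lp.single 2 n 1)
    (A B C D f g H : lp (fun _ : ℕ => ℝ) 2 → lp (fun _ : ℕ => ℝ) 2)
    (hA : ∀ x, A x = (-5 : ℝ) • x - (7 : ℝ) • e)
    (hB : ∀ x, B x = (5 : ℝ) • x + (5 : ℝ) • e)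
    (hC : ∀ x, C x = (-3 : ℝ) • x)
    (hD : ∀ x, D x = (2 : ℝ) • x + (3 : ℝ) • e)
    (hf : ∀ x, f x = (2 : ℝ) • x)
    (hg : ∀ x, g x = x - e)
    (hH : ∀ x, H x = A x + B x + C x + D x) :
    (0 : lp (fun _ : ℕ => ℝ) 2) ∉ Set.range (fun x => H x + (f x - g x)) := by
  rintro ⟨x, hx⟩
  simp only [hH, hA, hB, hC, hD, hf, hg] at hx
  have h2 : (2 : ℝ) • e = 0 := by
    rw [← hx]; module
  have hne : e ≠ 0 := by
    rw [he]
    intro h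
    have h' : (lp.single 2 n 1 : lp (fun _ : ℕ => ℝ) 2) n = (0 : lp (fun _ : ℕ => ℝ) 2) n := by
      rw [h]
    simp [lp.single_apply] at h'
  exact smul_ne_zero (two_ne_zero) hne h2
end

section
/- Let X be a real Hilbert space, M : X ⊸ X a set-valued map such that ⟨u - v, x - y⟩ ≥ m‖x - y‖² for all u ∈ M(x), v ∈ M(y) with m > 0, and H : X → X satisfying ⟨H(x) - H(y), x - y⟩ ≥ r‖x - y‖² with r > 0, and suppose (H + ρM)(X) = X for all ρ > 0. If (u₀, x₀) ∈ X × X satisfies ⟨u₀ - v, x₀ - y⟩ ≥ 0 for all (y, v) with v ∈ M(y), then u₀ ∈ M(x₀); i.e., M is maximal among monotone-type relations. -/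
/-! Solve `H x₁ + u₁ = H x₀ + u₀` with `u₁ ∈ M x₁` by surjectivity of `H + ρM` at `ρ = 1`. Then
`u₀ - u₁ = H x₁ - H x₀`, so the monotone relation of `(x₀, u₀)` to `(x₁, u₁)` gives
`⟨H x₀ - H x₁, x₀ - x₁⟩ ≤ 0`, and strong monotonicity of `H` forces `x₀ = x₁`, hence `u₀ = u₁`. -/

section StronglyMonotone

variable {X : Type*} [NormedAddCommGroup X] [InnerProductSpace ℝ X]

theorem eq_of_inner_sub_nonpos_of_strongly_monotone {H : X → X} {r : ℝ} (hr : 0 < r)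
    (hH : ∀ x y : X, r * ‖x - y‖ ^ 2 ≤ inner ℝ (H x - H y) (x - y)) {x y : X}
    (hxy : inner ℝ (H x - H y) (x - y) ≤ 0) : x = y := by
  have hnorm : ‖x - y‖ ^ 2 ≤ 0 := nonpos_of_mul_nonpos_right ((hH x y).trans hxy) hr
  rw [← sub_eq_zero, ← norm_eq_zero]
  exact pow_eq_zero_iff two_ne_zero |>.mp (le_antisymm hnorm (sq_nonneg _))

theorem eq_and_eq_of_add_eq_of_inner_nonneg {H : X → X} {r : ℝ} (hr : 0 < r)
    (hH : ∀ x y : X, r * ‖x - y‖ ^ 2 ≤ inner ℝ (H x - H y) (x - y)) {x₀ x₁ u₀ u₁ : X}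
    (hsum : H x₁ + u₁ = H x₀ + u₀) (hinner : 0 ≤ inner ℝ (u₀ - u₁) (x₀ - x₁)) :
    x₀ = x₁ ∧ u₀ = u₁ := by
  have hdiff : H x₀ - H x₁ = -(u₀ - u₁) := by
    rw [neg_sub, sub_eq_sub_iff_add_eq_add, ← hsum, add_comm]
  have hx : x₀ = x₁ := eq_of_inner_sub_nonpos_of_strongly_monotone hr hH <| by
    rw [hdiff, inner_neg_left]
    exact neg_nonpos.mpr hinner
  subst hx
  exact ⟨rfl, add_left_cancel hsum.symm⟩

end StronglyMonotone

theorem stmt19_general {X : Type*} [NormedAddCommGroup X] [InnerProductSpace ℝ X]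
    (M : X → Set X) (H : X → X) (r : ℝ) (hr : 0 < r)
    (hH : ∀ x y : X, (inner ℝ (H x - H y) (x - y) : ℝ) ≥ r * ‖x - y‖ ^ 2)
    (hsurj : ∀ ρ : ℝ, 0 < ρ → ∀ y : X, ∃ x, ∃ z ∈ M x, y = H x + ρ • z)
    (u₀ x₀ : X)
    (h₀ : ∀ y v : X, v ∈ M y → (inner ℝ (u₀ - v) (x₀ - y) : ℝ) ≥ 0) :
    u₀ ∈ M x₀ := by
  obtain ⟨x₁, u₁, hu₁, hsum⟩ := hsurj 1 one_pos (H x₀ + u₀)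
  rw [one_smul] at hsum
  obtain ⟨rfl, rfl⟩ := eq_and_eq_of_add_eq_of_inner_nonneg hr hH hsum.symm (h₀ x₁ u₁ hu₁)
  exact hu₁

/-- (Hilbert-space Proposition 3.6.) If M is m-strongly monotone (m > 0),
H is r-strongly monotone (r > 0) and H + ρM is surjective for all ρ > 0, then any pair
(u₀, x₀) monotonically related to the graph of M lies in the graph of M. -/
theorem stmt19 {X : Type*} [NormedAddCommGroup X] [InnerProductSpace ℝ X]
    (M : X → Set X) (H : X → X) (m r : ℝ) (hm : 0 < m) (hr : 0 < r)
    (hM : ∀ x y u v, u ∈ M x → v ∈ M y → (inner ℝ (u - v) (x - y) : ℝ) ≥ m * ‖x - y‖ ^ 2)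
    (hH : ∀ x y : X, (inner ℝ (H x - H y) (x - y) : ℝ) ≥ r * ‖x - y‖ ^ 2)
    (hsurj : ∀ ρ : ℝ, 0 < ρ → ∀ y : X, ∃ x, ∃ z ∈ M x, y = H x + ρ • z)
    (u₀ x₀ : X)
    (h₀ : ∀ y v : X, v ∈ M y → (inner ℝ (u₀ - v) (x₀ - y) : ℝ) ≥ 0) :
    u₀ ∈ M x₀ :=
  stmt19_general M H r hr hH hsurj u₀ x₀ h₀
end
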